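/- The twisted G-action acts by coalgebra automorphisms: for any g, h, k ∈ G and any c ∈ 𝒞, the identity Δ_{ghg⁻¹, gkg⁻¹}(T_{hk}(g)(c)) = (T_h(g) ⊗ T_k(g))(Δ_{h,k}(c)) holds in 𝒞⊗𝒞. -/

import Mathlib

/-!
Conjugation by `g` carries the `h`-twisted picture to the `ghg⁻¹`-twisted one:
`g ∘ h ∘ g⁻¹ = Ad(w_h) ∘ (ghg⁻¹)` with `w_h = c_{g,h} c_{gh,g⁻¹}`, and `g ∘ g⁻¹ = Ad(c_{g,g⁻¹} c_e)`.
Since `g⁻¹` preserves `θ`, the copairing `ξ` may be replaced by `(g⁻¹ ⊗ g⁻¹) ξ`; then both legs of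
the right-hand side become one-sided multiplications of `ghg⁻¹(ξ′ᵢ) ⊗ ξ″ᵢ`, and the Casimir
property `a ξ′ ⊗ ξ″ = ξ′ ⊗ ξ″ a` moves everything to the left leg. The coefficient obtained there is
`T_{hk}(g)(c) c_{ghg⁻¹,gkg⁻¹}⁻¹` by a 2-cocycle computation in the unit group of `𝒞`.
-/

open scoped TensorProduct

noncomputable section

variable {K : Type*} [Field K] {G : Type*} [Group G]
  {A : Type*} [Ring A] [Algebra K A] {ι : Type*} [Fintype ι]

/-- The subspace `𝒞_h = span{c₁c₂ − c₂·h(c₁) | c₁, c₂ ∈ 𝒞}`. -/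
def commSub (ρ : G → A ≃ₐ[K] A) (h : G) : Submodule K A :=
  Submodule.span K {x | ∃ c₁ c₂ : A, x = c₁ * c₂ - c₂ * ρ h c₁}

/-- The map `T_h(g)(c) = c_e⁻¹ c_{g,g⁻¹}⁻¹ g(c) c_{g,h} c_{gh,g⁻¹}`. -/
def Tmap (ρ : G → A ≃ₐ[K] A) (u : G → G → Aˣ) (ue : Aˣ) (g h : G) (x : A) : A :=
  (↑(ue⁻¹) : A) * (↑((u g g⁻¹)⁻¹) : A) * ρ g x * (↑(u g h) : A) * (↑(u (g * h) g⁻¹) : A)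

/-- The twisted multiplication `m_{g,h}(c′⊗c″) = Σᵢ ξ′ᵢ c′ g(ξ″ᵢ c″) c_{g,h}`. -/
def mMul (ρ : G → A ≃ₐ[K] A) (u : G → G → Aˣ) (ξ₁ ξ₂ : ι → A) (g h : G)
    (c' c'' : A) : A :=
  ∑ i, ξ₁ i * c' * ρ g (ξ₂ i * c'') * (↑(u g h) : A)

/-- The twisted comultiplication `Δ_{g,h}(c) = Σᵢ c c_{g,h}⁻¹ g(ξ′ᵢ) ⊗ ξ″ᵢ`. -/
def ΔCom (ρ : G → A ≃ₐ[K] A) (u : G → G → Aˣ) (ξ₁ ξ₂ : ι → A) (g h : G)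
    (c : A) : A ⊗[K] A :=
  ∑ i, (c * (↑((u g h)⁻¹) : A) * ρ g (ξ₁ i)) ⊗ₜ[K] ξ₂ i

/-- The subspace `𝒞_g ⊗ 𝒞` of `𝒞 ⊗ 𝒞`. -/
def leftTensor (ρ : G → A ≃ₐ[K] A) (g : G) : Submodule K (A ⊗[K] A) :=
  Submodule.span K {z | ∃ x ∈ commSub ρ g, ∃ y : A, z = x ⊗ₜ[K] y}

/-- The subspace `𝒞 ⊗ 𝒞_h` of `𝒞 ⊗ 𝒞`. -/
def rightTensor (ρ : G → A ≃ₐ[K] A) (h : G) : Submodule K (A ⊗[K] A) :=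
  Submodule.span K {z | ∃ x : A, ∃ y ∈ commSub ρ h, z = x ⊗ₜ[K] y}


section Frobenius

variable (θ : A →ₗ[K] K) (ξ₁ ξ₂ : ι → A)

theorem eq_sum_trace_mul_smul_of_symm (hξ : ∀ a : A, a = ∑ i, θ (a * ξ₂ i) • ξ₁ i)
    (hξsym : (∑ i, ξ₁ i ⊗ₜ[K] ξ₂ i) = ∑ i, ξ₂ i ⊗ₜ[K] ξ₁ i) (a : A) :
    a = ∑ i, θ (a * ξ₁ i) • ξ₂ i := by
  have := congrArg (TensorProduct.lift ((LinearMap.lsmul K A).comp (θ ∘ₗ LinearMap.mulLeft K a)))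
    hξsym
  simp only [map_sum, TensorProduct.lift.tmul, LinearMap.comp_apply, LinearMap.mulLeft_apply,
    LinearMap.lsmul_apply] at this
  rw [this]
  exact hξ a

theorem sum_mul_tmul_eq_sum_tmul_mul (htr : ∀ a b : A, θ (a * b) = θ (b * a))
    (hξ : ∀ a : A, a = ∑ i, θ (a * ξ₂ i) • ξ₁ i)
    (hξsym : (∑ i, ξ₁ i ⊗ₜ[K] ξ₂ i) = ∑ i, ξ₂ i ⊗ₜ[K] ξ₁ i) (a : A) :
    (∑ i, (a * ξ₁ i) ⊗ₜ[K] ξ₂ i) = ∑ i, ξ₁ i ⊗ₜ[K] (ξ₂ i * a) := by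
  have hξ' := eq_sum_trace_mul_smul_of_symm θ ξ₁ ξ₂ hξ hξsym
  calc (∑ i, (a * ξ₁ i) ⊗ₜ[K] ξ₂ i)
      = ∑ i, ∑ j, θ (a * ξ₁ i * ξ₂ j) • (ξ₁ j ⊗ₜ[K] ξ₂ i) := by
        refine Finset.sum_congr rfl fun i _ => ?_
        conv_lhs => rw [hξ (a * ξ₁ i), TensorProduct.sum_tmul]
        simp only [TensorProduct.smul_tmul']
    _ = ∑ j, ξ₁ j ⊗ₜ[K] ∑ i, θ (ξ₂ j * a * ξ₁ i) • ξ₂ i := by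
        rw [Finset.sum_comm]
        refine Finset.sum_congr rfl fun j _ => ?_
        rw [TensorProduct.tmul_sum]
        refine Finset.sum_congr rfl fun i _ => ?_
        rw [TensorProduct.tmul_smul, htr, mul_assoc]
    _ = ∑ i, ξ₁ i ⊗ₜ[K] (ξ₂ i * a) := by simp only [← hξ']

theorem sum_map_tmul_map_eq_self_of_trace_invariant (htr : ∀ a b : A, θ (a * b) = θ (b * a))
    (hξ : ∀ a : A, a = ∑ i, θ (a * ξ₂ i) • ξ₁ i)
    (hξsym : (∑ i, ξ₁ i ⊗ₜ[K] ξ₂ i) = ∑ i, ξ₂ i ⊗ₜ[K] ξ₁ i)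
    (φ : A ≃ₐ[K] A) (hφ : ∀ a : A, θ (φ a) = θ a) :
    (∑ i, φ (ξ₁ i) ⊗ₜ[K] φ (ξ₂ i)) = ∑ i, ξ₁ i ⊗ₜ[K] ξ₂ i := by
  have hξ' := eq_sum_trace_mul_smul_of_symm θ ξ₁ ξ₂ hξ hξsym
  have hθ : ∀ i j, θ (φ (ξ₁ i) * ξ₂ j) = θ (φ.symm (ξ₂ j) * ξ₁ i) := fun i j => by
    rw [htr, ← hφ (φ.symm _ * _), map_mul φ, AlgEquiv.apply_symm_apply]
  calc (∑ i, φ (ξ₁ i) ⊗ₜ[K] φ (ξ₂ i))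
      = ∑ i, ∑ j, θ (φ.symm (ξ₂ j) * ξ₁ i) • (ξ₁ j ⊗ₜ[K] φ (ξ₂ i)) := by
        refine Finset.sum_congr rfl fun i _ => ?_
        conv_lhs => rw [hξ (φ (ξ₁ i)), TensorProduct.sum_tmul]
        simp only [TensorProduct.smul_tmul', hθ]
    _ = ∑ j, ξ₁ j ⊗ₜ[K] φ (∑ i, θ (φ.symm (ξ₂ j) * ξ₁ i) • ξ₂ i) := by
        rw [Finset.sum_comm]
        simp only [map_sum, map_smul, TensorProduct.tmul_sum, TensorProduct.tmul_smul]
    _ = ∑ i, ξ₁ i ⊗ₜ[K] ξ₂ i := by simp only [← hξ', AlgEquiv.apply_symm_apply]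

end Frobenius

theorem sum_map_tmul_map_eq_of_sum_tmul_eq {R M N P Q : Type*} [CommSemiring R]
    [AddCommMonoid M] [AddCommMonoid N] [AddCommMonoid P] [AddCommMonoid Q]
    [Module R M] [Module R N] [Module R P] [Module R Q] (F : M →ₗ[R] P) (F' : N →ₗ[R] Q)
    {x₁ x₂ : ι → M} {y₁ y₂ : ι → N}
    (h : (∑ i, x₁ i ⊗ₜ[R] y₁ i) = ∑ i, x₂ i ⊗ₜ[R] y₂ i) :
    (∑ i, F (x₁ i) ⊗ₜ[R] F' (y₁ i)) = ∑ i, F (x₂ i) ⊗ₜ[R] F' (y₂ i) := by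
  simpa only [map_sum, TensorProduct.map_tmul] using congrArg (TensorProduct.map F F') h

section TwistedCocycle

variable {M : Type*} [Group M] (Φ : G → M →* M) (u : G → G → M) (e : M)

theorem twisted_cocycle_mul_inv
    (hcoc : ∀ a b c, u a b * u (a * b) c = Φ a (u b c) * u a (b * c))
    (hu1 : ∀ a, u a 1 = Φ a e) (a b : G) :
    Φ a (u b b⁻¹ * e) = u a b * u (a * b) b⁻¹ := by
  rw [hcoc, mul_inv_cancel, hu1, map_mul]

theorem twisted_cocycle_conj
    (hAd : ∀ a b v, Φ a (Φ b v) = u a b * Φ (a * b) v * (u a b)⁻¹)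
    (hcoc : ∀ a b c, u a b * u (a * b) c = Φ a (u b c) * u a (b * c))
    (hu1 : ∀ a, u a 1 = Φ a e) (g h k : G) :
    u g h * u (g * h) g⁻¹ *
        Φ (g * h * g⁻¹) ((u g g⁻¹ * e)⁻¹ * (u g k * u (g * k) g⁻¹)) *
        u (g * h * g⁻¹) (g * k * g⁻¹) =
      Φ g (u h k) * (u g (h * k) * u (g * (h * k)) g⁻¹) := by
  have hsg : g * h * g⁻¹ * g = g * h := by group
  have hP := twisted_cocycle_mul_inv Φ u e hcoc hu1 (g * h * g⁻¹) g
  have hst := (hcoc (g * h * g⁻¹) g (k * g⁻¹)).symm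
  rw [← mul_assoc g k] at hst
  -- opaque conjugates keep `simp only [mul_assoc]` below from reassociating them
  generalize g * h * g⁻¹ = s at hsg hP hst ⊢
  generalize g * k * g⁻¹ = t at hst ⊢
  rw [hsg] at hP hst
  rw [hcoc g k g⁻¹, map_mul, map_mul, map_inv, hP, hAd, hsg]
  simp only [mul_inv_rev, mul_assoc, mul_inv_cancel_left, inv_mul_cancel_left]
  rw [hst, inv_mul_cancel_left, ← hcoc, ← mul_assoc, hcoc, mul_assoc g h k, mul_assoc]

end TwistedCocycle

section TwistedAction

variable (ρ : G → A ≃ₐ[K] A) (u : G → G → Aˣ) (ue : Aˣ)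

def Tmapₗ (g h : G) : A →ₗ[K] A where
  toFun := Tmap ρ u ue g h
  map_add' x y := by simp only [Tmap, map_add, mul_add, add_mul]
  map_smul' r x := by simp only [Tmap, map_smul, mul_smul_comm, smul_mul_assoc, RingHom.id_apply]

@[simp]
theorem Tmapₗ_apply (g h : G) (x : A) : Tmapₗ ρ u ue g h x = Tmap ρ u ue g h x := rfl

theorem Tmap_eq_mul (g h : G) (x : A) :
    Tmap ρ u ue g h x = ↑((u g g⁻¹ * ue)⁻¹) * ρ g x * ↑(u g h * u (g * h) g⁻¹) := by
  simp only [Tmap, mul_inv_rev, Units.val_mul, mul_assoc]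

variable {ρ u ue}

theorem map_map_inv_eq_conj (hAd : ∀ (g h : G) (x : A),
      ρ g (ρ h x) = (↑(u g h) : A) * ρ (g * h) x * (↑((u g h)⁻¹) : A))
    (hAde : ∀ x : A, ρ (1 : G) x = (↑ue : A) * x * (↑(ue⁻¹) : A)) (g : G) (y : A) :
    ρ g (ρ g⁻¹ y) = ↑(u g g⁻¹ * ue) * y * ↑(u g g⁻¹ * ue)⁻¹ := by
  rw [hAd, mul_inv_cancel, hAde]
  simp only [Units.val_mul, mul_inv_rev, mul_assoc]

theorem map_map_map_inv_eq_conj (hAd : ∀ (g h : G) (x : A),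
      ρ g (ρ h x) = (↑(u g h) : A) * ρ (g * h) x * (↑((u g h)⁻¹) : A))
    (hcoc : ∀ g h k : G,
      (↑(u g h) : A) * (↑(u (g * h) k) : A) = ρ g (↑(u h k) : A) * (↑(u g (h * k)) : A))
    (g h : G) (x : A) :
    ρ g (ρ h (ρ g⁻¹ x)) =
      ↑(u g h * u (g * h) g⁻¹) * ρ (g * h * g⁻¹) x * ↑(u g h * u (g * h) g⁻¹)⁻¹ := by
  have hw : u g h * u (g * h) g⁻¹ = Units.map (ρ g : A →* A) (u h g⁻¹) * u g (h * g⁻¹) :=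
    Units.ext (by simpa using hcoc g h g⁻¹)
  rw [hAd h, map_mul, map_mul, hAd g, ← mul_assoc g h, hw]
  simp only [Units.val_mul, mul_inv_rev, Units.coe_map, Units.coe_map_inv, MonoidHom.coe_coe,
    mul_assoc]

theorem Tmap_map_inv (hAd : ∀ (g h : G) (x : A),
      ρ g (ρ h x) = (↑(u g h) : A) * ρ (g * h) x * (↑((u g h)⁻¹) : A))
    (hAde : ∀ x : A, ρ (1 : G) x = (↑ue : A) * x * (↑(ue⁻¹) : A)) (g k : G) (y : A) :
    Tmap ρ u ue g k (ρ g⁻¹ y) = y * ↑((u g g⁻¹ * ue)⁻¹ * (u g k * u (g * k) g⁻¹)) := by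
  rw [Tmap_eq_mul, map_map_inv_eq_conj hAd hAde, Units.val_mul (u g g⁻¹ * ue)⁻¹]
  simp only [mul_assoc, Units.inv_mul_cancel_left]

theorem Tmap_mul_map_map_inv (hAd : ∀ (g h : G) (x : A),
      ρ g (ρ h x) = (↑(u g h) : A) * ρ (g * h) x * (↑((u g h)⁻¹) : A))
    (hcoc : ∀ g h k : G,
      (↑(u g h) : A) * (↑(u (g * h) k) : A) = ρ g (↑(u h k) : A) * (↑(u g (h * k)) : A))
    (g h : G) (a x : A) :
    Tmap ρ u ue g h (a * ρ h (ρ g⁻¹ x)) =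
      ↑((u g g⁻¹ * ue)⁻¹) * ρ g a * ↑(u g h * u (g * h) g⁻¹) * ρ (g * h * g⁻¹) x := by
  rw [Tmap_eq_mul, map_mul, map_map_map_inv_eq_conj hAd hcoc]
  simp only [mul_assoc, Units.inv_mul, mul_one]

theorem Tmap_mul_cocycle_inv_eq (hAd : ∀ (g h : G) (x : A),
      ρ g (ρ h x) = (↑(u g h) : A) * ρ (g * h) x * (↑((u g h)⁻¹) : A))
    (hcoc : ∀ g h k : G,
      (↑(u g h) : A) * (↑(u (g * h) k) : A) = ρ g (↑(u h k) : A) * (↑(u g (h * k)) : A))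
    (hue1 : ∀ g : G, (↑(u g 1) : A) = ρ g (↑ue : A)) (g h k : G) (c : A) :
    Tmap ρ u ue g (h * k) c * ↑(u (g * h * g⁻¹) (g * k * g⁻¹))⁻¹ =
      ↑((u g g⁻¹ * ue)⁻¹) * ρ g (c * ↑(u h k)⁻¹) * ↑(u g h * u (g * h) g⁻¹) *
        ρ (g * h * g⁻¹) ↑((u g g⁻¹ * ue)⁻¹ * (u g k * u (g * k) g⁻¹)) := by
  set Φ : G → Aˣ →* Aˣ := fun σ => Units.map (ρ σ : A →* A)
  have hval : ∀ σ (v : Aˣ), (↑(Φ σ v) : A) = ρ σ ↑v := fun _ _ => rfl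
  have key := twisted_cocycle_conj Φ u ue
    (fun a b v => Units.ext (by simpa only [hval, Units.val_mul] using hAd a b v))
    (fun a b c => Units.ext (by simpa only [hval, Units.val_mul] using hcoc a b c))
    (fun a => Units.ext (by simpa only [hval] using hue1 a)) g h k
  have key' : u g (h * k) * u (g * (h * k)) g⁻¹ * (u (g * h * g⁻¹) (g * k * g⁻¹))⁻¹ =
      Φ g (u h k)⁻¹ * (u g h * u (g * h) g⁻¹ *
        Φ (g * h * g⁻¹) ((u g g⁻¹ * ue)⁻¹ * (u g k * u (g * k) g⁻¹))) := by
    rw [map_inv, eq_inv_mul_iff_mul_eq, ← mul_assoc, mul_inv_eq_iff_eq_mul, key]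
  rw [Tmap_eq_mul, mul_assoc, ← Units.val_mul, key']
  simp only [Units.val_mul, hval, map_mul, mul_assoc]

end TwistedAction

theorem Tmap_coalgebra_automorphism_general
    (ρ : G → A ≃ₐ[K] A) (u : G → G → Aˣ) (ue : Aˣ)
    (hAd : ∀ (g h : G) (x : A),
      ρ g (ρ h x) = (↑(u g h) : A) * ρ (g * h) x * (↑((u g h)⁻¹) : A))
    (hAde : ∀ x : A, ρ (1 : G) x = (↑ue : A) * x * (↑(ue⁻¹) : A))
    (hcoc : ∀ g h k : G,
      (↑(u g h) : A) * (↑(u (g * h) k) : A) = ρ g (↑(u h k) : A) * (↑(u g (h * k)) : A))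
    (hue1 : ∀ g : G, (↑(u g 1) : A) = ρ g (↑ue : A))
    (θ : A →ₗ[K] K)
    (htr : ∀ a b : A, θ (a * b) = θ (b * a))
    (hGinv : ∀ (g : G) (a : A), θ (ρ g a) = θ a)
    (ξ₁ ξ₂ : ι → A)
    (hξ : ∀ a : A, a = ∑ i, θ (a * ξ₂ i) • ξ₁ i)
    (hξsym : (∑ i, ξ₁ i ⊗ₜ[K] ξ₂ i) = ∑ i, ξ₂ i ⊗ₜ[K] ξ₁ i)
    (g h k : G) (c : A) :
    ΔCom ρ u ξ₁ ξ₂ (g * h * g⁻¹) (g * k * g⁻¹) (Tmap ρ u ue g (h * k) c) =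
      ∑ i, Tmap ρ u ue g h (c * (↑((u h k)⁻¹) : A) * ρ h (ξ₁ i)) ⊗ₜ[K]
        Tmap ρ u ue g k (ξ₂ i) := by
  set s := g * h * g⁻¹
  set r : A := ↑((u g g⁻¹ * ue)⁻¹ * (u g k * u (g * k) g⁻¹))
  set m : A := ↑((u g g⁻¹ * ue)⁻¹) * ρ g (c * ↑(u h k)⁻¹) * ↑(u g h * u (g * h) g⁻¹)
  let F : A →ₗ[K] A :=
    Tmapₗ ρ u ue g h ∘ₗ LinearMap.mulLeft K (c * ↑(u h k)⁻¹) ∘ₗ (ρ h).toLinearMap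
  calc ΔCom ρ u ξ₁ ξ₂ s (g * k * g⁻¹) (Tmap ρ u ue g (h * k) c)
      = ∑ i, (m * ρ s (r * ξ₁ i)) ⊗ₜ[K] ξ₂ i := by
        rw [ΔCom, Tmap_mul_cocycle_inv_eq hAd hcoc hue1]
        simp only [map_mul, mul_assoc, m, r, s]
    _ = ∑ i, (m * ρ s (ξ₁ i)) ⊗ₜ[K] (ξ₂ i * r) :=
        sum_map_tmul_map_eq_of_sum_tmul_eq (LinearMap.mulLeft K m ∘ₗ (ρ s).toLinearMap)
          LinearMap.id (sum_mul_tmul_eq_sum_tmul_mul θ ξ₁ ξ₂ htr hξ hξsym r)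
    _ = ∑ i, F (ρ g⁻¹ (ξ₁ i)) ⊗ₜ[K] Tmapₗ ρ u ue g k (ρ g⁻¹ (ξ₂ i)) := by
        simp only [F, LinearMap.comp_apply, LinearMap.mulLeft_apply, AlgEquiv.toLinearMap_apply,
          Tmapₗ_apply, Tmap_mul_map_map_inv hAd hcoc, Tmap_map_inv hAd hAde, m, r, s]
    _ = _ := sum_map_tmul_map_eq_of_sum_tmul_eq F (Tmapₗ ρ u ue g k)
          (sum_map_tmul_map_eq_self_of_trace_invariant θ ξ₁ ξ₂ htr hξ hξsym (ρ g⁻¹) (hGinv g⁻¹))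

theorem Tmap_coalgebra_automorphism
    [Fintype G] (ρ : G → A ≃ₐ[K] A) (u : G → G → Aˣ) (ue : Aˣ)
    (hAd : ∀ (g h : G) (x : A),
      ρ g (ρ h x) = (↑(u g h) : A) * ρ (g * h) x * (↑((u g h)⁻¹) : A))
    (hAde : ∀ x : A, ρ (1 : G) x = (↑ue : A) * x * (↑(ue⁻¹) : A))
    (hcoc : ∀ g h k : G,
      (↑(u g h) : A) * (↑(u (g * h) k) : A) = ρ g (↑(u h k) : A) * (↑(u g (h * k)) : A))
    (hue1 : ∀ g : G, (↑(u g 1) : A) = ρ g (↑ue : A))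
    (hue2 : ∀ g : G, (↑(u 1 g) : A) = (↑ue : A))
    [FiniteDimensional K A] (θ : A →ₗ[K] K)
    (htr : ∀ a b : A, θ (a * b) = θ (b * a))
    (hnd : ∀ a : A, (∀ b : A, θ (a * b) = 0) → a = 0)
    (hGinv : ∀ (g : G) (a : A), θ (ρ g a) = θ a)
    (ξ₁ ξ₂ : ι → A)
    (hξ : ∀ a : A, a = ∑ i, θ (a * ξ₂ i) • ξ₁ i)
    (hξsym : (∑ i, ξ₁ i ⊗ₜ[K] ξ₂ i) = ∑ i, ξ₂ i ⊗ₜ[K] ξ₁ i)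
    (g h k : G) (c : A) :
    ΔCom ρ u ξ₁ ξ₂ (g * h * g⁻¹) (g * k * g⁻¹) (Tmap ρ u ue g (h * k) c) =
      ∑ i, Tmap ρ u ue g h (c * (↑((u h k)⁻¹) : A) * ρ h (ξ₁ i)) ⊗ₜ[K]
        Tmap ρ u ue g k (ξ₂ i) :=
  Tmap_coalgebra_automorphism_general ρ u ue hAd hAde hcoc hue1 θ htr hGinv ξ₁ ξ₂ hξ hξsym g h k c
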